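/- Let θ ≥ 2 be an integer and β > 0. Then the one-sided derivatives of h ↦ z(β,h) at h = 0 exist and satisfy lim_{h↓0} (z(β,h) − z(β,0))/h = x_1^↑(β) − 1/θ and lim_{h↑0} (z(β,h) − z(β,0))/h = x_θ^↓(β) − 1/θ. -/

import Mathlib

/-!
`z(β, ·)` is the value of maximising `h u + g` over the compact set `Δ_θ`, with `u x = x_1 - 1/θ`
for `h ≥ 0`, and `g`, the value of maximising the continuous `φ_β` over the compact graph of
`x ↦ Δ_θ(x)`, is upper semicontinuous. Danskin's argument then identifies the right derivative at
`0` with the largest value of `u` on the maximisers of `g`: such a maximiser gives the lower bound,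
and by compactness the maximisers of the perturbed problems are near-maximisers of `g`, on which
`u` is at most slightly above that value. The maximisers of `g` are exactly the points dominated by
some maximiser of `φ_β`, and domination can only raise `x_1` and lower `x_θ`, so the extreme values
over them are those over `M_β`. The left derivative is the same argument for `-h` and `x_θ`.
-/

open Filter Topology

def simplexOrd (θ : ℕ) : Set (Fin θ → ℝ) :=
  {x | (∀ i j : Fin θ, i ≤ j → x j ≤ x i) ∧ (∀ i, 0 ≤ x i) ∧ ∑ i, x i = 1}

noncomputable def phiFE (θ : ℕ) (β : ℝ) (x : Fin θ → ℝ) : ℝ :=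
  β / 2 * ((∑ i, (x i) ^ 2) - 1) - ∑ i, x i * Real.log (x i)

def domR (θ : ℕ) (y x : Fin θ → ℝ) : Prop :=
  ∀ j : Fin θ, (∑ i ∈ Finset.univ.filter (fun i : Fin θ => i ≤ j), x i)
    ≤ ∑ i ∈ Finset.univ.filter (fun i : Fin θ => i ≤ j), y i

def domSet (θ : ℕ) (x : Fin θ → ℝ) : Set (Fin θ → ℝ) :=
  {y ∈ simplexOrd θ | domR θ y x}

def maxSet (θ : ℕ) (β : ℝ) : Set (Fin θ → ℝ) :=
  {x ∈ simplexOrd θ | ∀ y ∈ simplexOrd θ, phiFE θ β y ≤ phiFE θ β x}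

open Set

section ValueFunction

variable {X Y γ : Type*} [TopologicalSpace X] [TopologicalSpace Y] [LinearOrder γ]

theorem upperSemicontinuousOn_of_isGreatest_image [T2Space X] {s : Set X} {Γ : X → Set Y}
    (hΓ : IsCompact {p : X × Y | p.1 ∈ s ∧ p.2 ∈ Γ p.1}) {φ : Y → γ}
    (hφ : UpperSemicontinuous φ) {g : X → γ} (hg : ∀ x ∈ s, IsGreatest (φ '' Γ x) (g x)) :
    UpperSemicontinuousOn g s := by
  refine upperSemicontinuousOn_iff_preimage_Ici.2 fun b => ?_
  let graph := {p : X × Y | p.1 ∈ s ∧ p.2 ∈ Γ p.1}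
  refine ⟨Prod.fst '' (graph ∩ Prod.snd ⁻¹' (φ ⁻¹' Ici b)), ?_, ?_⟩
  · exact ((hΓ.inter_right ((hφ.isClosed_preimage b).preimage continuous_snd)).image
      continuous_fst).isClosed
  · ext x
    constructor
    · rintro ⟨hx, hbx⟩
      obtain ⟨y, hy, hyx⟩ := (hg x hx).1
      exact ⟨hx, (x, y), ⟨⟨hx, hy⟩, show b ≤ φ y from hyx ▸ hbx⟩, rfl⟩
    · rintro ⟨hx, _, ⟨⟨-, hy⟩, hby⟩, rfl⟩
      exact ⟨hx, le_trans hby ((hg _ hx).2 ⟨_, hy, rfl⟩)⟩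

end ValueFunction

section Argmax

variable {X γ β : Type*} [Preorder γ] [Preorder β] {K : Set X} {Γ : X → Set X} {φ g : X → γ}

theorem isMaxOn_of_isGreatest_image (hg : ∀ x ∈ K, IsGreatest (φ '' Γ x) (g x))
    (hΓK : ∀ x ∈ K, Γ x ⊆ K) (hΓ : ∀ x ∈ K, x ∈ Γ x) {x : X} (hx : x ∈ K)
    (hmax : IsMaxOn φ K x) : IsMaxOn g K x := by
  intro w hw
  obtain ⟨y, hy, hyw⟩ := (hg w hw).1
  calc g w = φ y := hyw.symm
    _ ≤ φ x := hmax (hΓK w hw hy)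
    _ ≤ g x := (hg x hx).2 ⟨x, hΓ x hx, rfl⟩

theorem exists_isMaxOn_of_isGreatest_image (hg : ∀ x ∈ K, IsGreatest (φ '' Γ x) (g x))
    (hΓ : ∀ x ∈ K, x ∈ Γ x) {x : X} (hx : x ∈ K) (hmax : IsMaxOn g K x) :
    ∃ y ∈ Γ x, IsMaxOn φ K y := by
  obtain ⟨y, hy, hyx⟩ := (hg x hx).1
  refine ⟨y, hy, fun w hw => ?_⟩
  calc φ w ≤ g w := (hg w hw).2 ⟨w, hΓ w hw, rfl⟩
    _ ≤ g x := hmax hw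
    _ = φ y := hyx.symm

theorem isGreatest_image_isMaxOn_of_isGreatest_image
    (hg : ∀ x ∈ K, IsGreatest (φ '' Γ x) (g x)) (hΓK : ∀ x ∈ K, Γ x ⊆ K)
    (hΓ : ∀ x ∈ K, x ∈ Γ x) {u : X → β} (hu : ∀ x ∈ K, ∀ y ∈ Γ x, u x ≤ u y) {c : β}
    (hc : IsGreatest (u '' {x ∈ K | IsMaxOn φ K x}) c) :
    IsGreatest (u '' {x ∈ K | IsMaxOn g K x}) c := by
  refine ⟨?_, ?_⟩
  · obtain ⟨x, ⟨hx, hmax⟩, rfl⟩ := hc.1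
    exact ⟨x, ⟨hx, isMaxOn_of_isGreatest_image hg hΓK hΓ hx hmax⟩, rfl⟩
  · rintro _ ⟨x, ⟨hx, hmax⟩, rfl⟩
    obtain ⟨y, hy, hymax⟩ := exists_isMaxOn_of_isGreatest_image hg hΓ hx hmax
    exact (hu x hx y hy).trans (hc.2 ⟨y, ⟨hΓK x hx hy, hymax⟩, rfl⟩)

theorem isLeast_image_isMaxOn_of_isGreatest_image
    (hg : ∀ x ∈ K, IsGreatest (φ '' Γ x) (g x)) (hΓK : ∀ x ∈ K, Γ x ⊆ K)
    (hΓ : ∀ x ∈ K, x ∈ Γ x) {u : X → β} (hu : ∀ x ∈ K, ∀ y ∈ Γ x, u y ≤ u x) {c : β}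
    (hc : IsLeast (u '' {x ∈ K | IsMaxOn φ K x}) c) :
    IsLeast (u '' {x ∈ K | IsMaxOn g K x}) c :=
  isGreatest_image_isMaxOn_of_isGreatest_image (β := βᵒᵈ) hg hΓK hΓ hu hc

end Argmax

section Danskin

variable {X : Type*} [TopologicalSpace X] {K : Set X} {G u : X → ℝ} {z : ℝ → ℝ} {c : ℝ}

theorem IsCompact.exists_lt_forall_le_of_upperSemicontinuousOn (hK : IsCompact K)
    (hG : UpperSemicontinuousOn G K) {m : ℝ} (h : ∀ x ∈ K, G x < m) :
    ∃ m' < m, ∀ x ∈ K, G x ≤ m' := by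
  rcases K.eq_empty_or_nonempty with rfl | hne
  · exact ⟨m - 1, by linarith, by simp⟩
  · obtain ⟨a, ha, hmax⟩ := hG.exists_isMaxOn hne hK
    exact ⟨G a, h a ha, hmax⟩

theorem exists_pos_forall_lt_add_of_isMaxOn (hK : IsCompact K) (hG : UpperSemicontinuousOn G K)
    (hu : ContinuousOn u K) (hc : ∀ x ∈ K, IsMaxOn G K x → u x ≤ c) {x₀ : X}
    (hx₀ : IsMaxOn G K x₀) {ε : ℝ} (hε : 0 < ε) :
    ∃ δ > 0, ∀ x ∈ K, G x₀ - δ < G x → u x < c + ε := by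
  have hA : IsCompact (K ∩ u ⁻¹' Ici (c + ε)) :=
    hu.upperSemicontinuousOn.isCompact_inter_preimage_Ici hK _
  have hlt : ∀ x ∈ K ∩ u ⁻¹' Ici (c + ε), G x < G x₀ := by
    rintro x ⟨hxK, hux⟩
    refine (hx₀ hxK).lt_of_ne fun hx => ?_
    have hmax : IsMaxOn G K x := fun w hw => hx ▸ hx₀ hw
    linarith [hc x hxK hmax, show c + ε ≤ u x from hux]
  obtain ⟨m, hm, hAm⟩ := hA.exists_lt_forall_le_of_upperSemicontinuousOn (hG.mono inter_subset_left) hlt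
  refine ⟨G x₀ - m, sub_pos.2 hm, fun x hx hGx => lt_of_not_ge fun hux => ?_⟩
  linarith [hAm x ⟨hx, hux⟩]

theorem tendsto_slope_nhdsGT_of_isGreatest (hK : IsCompact K) (hG : UpperSemicontinuousOn G K)
    (hu : ContinuousOn u K)
    (hz : ∀ h, 0 ≤ h → IsGreatest ((fun x => h * u x + G x) '' K) (z h))
    (hc : IsGreatest (u '' {x ∈ K | IsMaxOn G K x}) c) :
    Tendsto (fun h => (z h - z 0) / h) (𝓝[>] 0) (𝓝 c) := by
  obtain ⟨x₀, ⟨hx₀K, hx₀⟩, rfl⟩ := hc.1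
  have hz₀ : z 0 = G x₀ := by
    obtain ⟨x, hx, hzx⟩ := (hz 0 le_rfl).1
    refine le_antisymm ?_ ?_
    · simpa [← hzx] using hx₀ hx
    · simpa using (hz 0 le_rfl).2 ⟨x₀, hx₀K, rfl⟩
  have lower : ∀ h, 0 ≤ h → h * u x₀ + z 0 ≤ z h := fun h hh =>
    hz₀ ▸ (hz h hh).2 ⟨x₀, hx₀K, rfl⟩
  obtain ⟨B, hB⟩ := hK.bddAbove_image hu
  refine tendsto_order.2 ⟨fun a ha => ?_, fun a ha => ?_⟩
  · filter_upwards [self_mem_nhdsWithin] with h (hh : 0 < h)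
    rw [lt_div_iff₀ hh]
    nlinarith [lower h hh.le]
  · obtain ⟨δ, hδ, hnear⟩ := exists_pos_forall_lt_add_of_isMaxOn hK hG hu
      (fun x hx hmax => hc.2 ⟨x, ⟨hx, hmax⟩, rfl⟩) hx₀ (sub_pos.2 ha)
    have hsmall : ∀ᶠ h in 𝓝[>] 0, h * (B - u x₀) < δ := by
      refine (Tendsto.mono_left ?_ nhdsWithin_le_nhds).eventually (gt_mem_nhds hδ)
      simpa using (continuous_mul_const (B - u x₀)).tendsto 0
    filter_upwards [self_mem_nhdsWithin, hsmall] with h (hh : 0 < h) hhB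
    obtain ⟨x, hx, hzx⟩ := (hz h hh.le).1
    dsimp only at hzx
    -- a near-maximiser of the perturbed problem is a near-maximiser of `G`
    have hGx : G x₀ - δ < G x := by
      nlinarith [lower h hh.le, hB ⟨x, hx, rfl⟩, hhB]
    have hux : u x < a := by linarith [hnear x hx hGx]
    rw [div_lt_iff₀ hh, ← hzx, hz₀]
    nlinarith [show G x ≤ G x₀ from hx₀ hx, mul_lt_mul_of_pos_left hux hh]

theorem tendsto_slope_nhdsLT_of_isGreatest (hK : IsCompact K) (hG : UpperSemicontinuousOn G K)
    (hu : ContinuousOn u K)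
    (hz : ∀ h, h ≤ 0 → IsGreatest ((fun x => h * u x + G x) '' K) (z h))
    (hc : IsLeast (u '' {x ∈ K | IsMaxOn G K x}) c) :
    Tendsto (fun h => (z h - z 0) / h) (𝓝[<] 0) (𝓝 c) := by
  have hz' : ∀ h, 0 ≤ h → IsGreatest ((fun x => h * -u x + G x) '' K) (z (-h)) := by
    intro h hh
    simpa only [mul_neg, neg_mul] using hz (-h) (by linarith)
  have hc' : IsGreatest ((fun x => -u x) '' {x ∈ K | IsMaxOn G K x}) (-c) := by
    simpa only [image_image] using (show Antitone fun t : ℝ => -t from fun _ _ => neg_le_neg).map_isLeast hc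
  have hneg : Tendsto Neg.neg (𝓝[<] (0 : ℝ)) (𝓝[>] 0) := by
    simpa using tendsto_neg_nhdsLT (a := (0 : ℝ))
  simpa [Function.comp_def, div_neg] using
    ((tendsto_slope_nhdsGT_of_isGreatest hK hG hu.neg hz' hc').comp hneg).neg

end Danskin

section Simplex

variable {θ : ℕ}

theorem isCompact_simplexOrd (θ : ℕ) : IsCompact (simplexOrd θ) :=
  (isCompact_stdSimplex ℝ (Fin θ)).inter_left isClosed_antitone

theorem continuous_phiFE (θ : ℕ) (β : ℝ) : Continuous (phiFE θ β) := by
  unfold phiFE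
  have hlog : Continuous fun x : Fin θ → ℝ => ∑ i, x i * Real.log (x i) :=
    continuous_finsetSum _ fun i _ => Real.continuous_mul_log.comp (continuous_apply i)
  fun_prop

theorem maxSet_eq (θ : ℕ) (β : ℝ) :
    maxSet θ β = {x ∈ simplexOrd θ | IsMaxOn (phiFE θ β) (simplexOrd θ) x} :=
  rfl

theorem isClosed_setOf_domR :
    IsClosed {p : (Fin θ → ℝ) × (Fin θ → ℝ) | domR θ p.2 p.1} := by
  simp only [domR, ofPred_forall]
  exact isClosed_iInter fun j => isClosed_le (by fun_prop) (by fun_prop)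

theorem isCompact_graph_domSet (θ : ℕ) :
    IsCompact {p : (Fin θ → ℝ) × (Fin θ → ℝ) | p.1 ∈ simplexOrd θ ∧ p.2 ∈ domSet θ p.1} := by
  convert ((isCompact_simplexOrd θ).prod (isCompact_simplexOrd θ)).inter_right
    isClosed_setOf_domR using 1
  ext p
  simp only [domSet, mem_ofPred_eq, mem_inter_iff, mem_prod, and_assoc]

theorem self_mem_domSet {x : Fin θ → ℝ} (hx : x ∈ simplexOrd θ) : x ∈ domSet θ x :=
  ⟨hx, fun _ => le_rfl⟩

theorem domR.apply_zero_le {x y : Fin θ → ℝ} (h : domR θ y x) (hθ : 0 < θ) :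
    x ⟨0, hθ⟩ ≤ y ⟨0, hθ⟩ := by
  have hfilter : Finset.univ.filter (fun i : Fin θ => i ≤ ⟨0, hθ⟩) = {⟨0, hθ⟩} := by
    ext i
    simp [Fin.le_def, Fin.ext_iff]
  simpa [hfilter] using h ⟨0, hθ⟩

theorem domR.apply_last_le {x y : Fin θ → ℝ} (h : domR θ y x) (hθ : 1 < θ)
    (hsum : ∑ i, x i = ∑ i, y i) : y ⟨θ - 1, by omega⟩ ≤ x ⟨θ - 1, by omega⟩ := by
  set last : Fin θ := ⟨θ - 1, by omega⟩
  have hfilter : Finset.univ.filter (fun i : Fin θ => i ≤ ⟨θ - 2, by omega⟩) =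
      Finset.univ.erase last := by
    ext i
    simp only [Finset.mem_filter, Finset.mem_univ, true_and, Finset.mem_erase, and_true,
      Fin.le_def, Fin.ext_iff, ne_eq, last]
    omega
  have hpartial := h ⟨θ - 2, by omega⟩
  rw [hfilter] at hpartial
  linarith [Finset.add_sum_erase Finset.univ x (Finset.mem_univ last),
    Finset.add_sum_erase Finset.univ y (Finset.mem_univ last)]

end Simplex

/-- the one-sided derivatives of `h ↦ z(β,h)` at `h = 0` exist and equal
`x_1^↑(β) − 1/θ` (right) and `x_θ^↓(β) − 1/θ` (left). -/
theorem stmt10 (θ : ℕ) (hθ : 2 ≤ θ) (β : ℝ)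
    (g : (Fin θ → ℝ) → ℝ)
    (hg : ∀ x ∈ simplexOrd θ, IsGreatest (phiFE θ β '' domSet θ x) (g x))
    (z : ℝ → ℝ)
    (hz1 : ∀ h : ℝ, 0 ≤ h → IsGreatest
      ((fun x : Fin θ → ℝ => h * (x ⟨0, by omega⟩ - 1 / (θ : ℝ)) + g x) '' simplexOrd θ) (z h))
    (hz2 : ∀ h : ℝ, h ≤ 0 → IsGreatest
      ((fun x : Fin θ → ℝ => h * (x ⟨θ - 1, by omega⟩ - 1 / (θ : ℝ)) + g x) '' simplexOrd θ)
      (z h))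
    (x1up : ℝ)
    (hx1up : IsGreatest ((fun x : Fin θ → ℝ => x ⟨0, by omega⟩) '' maxSet θ β) x1up)
    (xthdown : ℝ)
    (hxth : IsLeast ((fun x : Fin θ → ℝ => x ⟨θ - 1, by omega⟩) '' maxSet θ β) xthdown) :
    Tendsto (fun h : ℝ => (z h - z 0) / h) (nhdsWithin 0 (Set.Ioi 0))
        (nhds (x1up - 1 / (θ : ℝ))) ∧
    Tendsto (fun h : ℝ => (z h - z 0) / h) (nhdsWithin 0 (Set.Iio 0))
        (nhds (xthdown - 1 / (θ : ℝ))) := by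
  have hΔ := isCompact_simplexOrd θ
  have hg_usc : UpperSemicontinuousOn g (simplexOrd θ) :=
    upperSemicontinuousOn_of_isGreatest_image (isCompact_graph_domSet θ)
      (continuous_phiFE θ β).upperSemicontinuous hg
  have hdom_sub : ∀ x ∈ simplexOrd θ, domSet θ x ⊆ simplexOrd θ := fun _ _ => sep_subset _ _
  have hdom_self : ∀ x ∈ simplexOrd θ, x ∈ domSet θ x := fun _ hx => self_mem_domSet hx
  have hshift : Monotone fun t : ℝ => t - 1 / θ := fun _ _ h => sub_le_sub_right h _
  refine ⟨tendsto_slope_nhdsGT_of_isGreatest hΔ hg_usc (by fun_prop) hz1 ?_,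
    tendsto_slope_nhdsLT_of_isGreatest hΔ hg_usc (by fun_prop) hz2 ?_⟩
  · refine isGreatest_image_isMaxOn_of_isGreatest_image hg hdom_sub hdom_self
      (fun x _ y hy => sub_le_sub_right (hy.2.apply_zero_le _) _) ?_
    simpa only [image_image, maxSet_eq] using hshift.map_isGreatest hx1up
  · refine isLeast_image_isMaxOn_of_isGreatest_image hg hdom_sub hdom_self
      (fun x hx y hy => sub_le_sub_right (hy.2.apply_last_le hθ (hx.2.2.trans hy.1.2.2.symm)) _) ?_
    simpa only [image_image, maxSet_eq] using hshift.map_isLeast hxth
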